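/- Let R be a relational structure on E. The collection of monomorphic parts of R satisfies the goodness axioms: every singleton is a monomorphic part; every subset of a monomorphic part is a monomorphic part; and any family of monomorphic parts with a common point has union a monomorphic part. -/

import Mathlib

/-- A relational structure on a base set (type) `E`: a family of finitary relations on `E`. -/
structure RelStruct (E : Type*) where
  ι : Type*
  arity : ι → ℕ
  rel : ∀ i : ι, (Fin (arity i) → E) → Prop

/-- The substructures induced by `R` on `A` and `B` are isomorphic: there is a bijection
`A ≃ B` transporting every relation of `R` restricted to `A` onto its restriction to `B`. -/
def RelStruct.Iso {E : Type*} (R : RelStruct E) (A B : Set E) : Prop :=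
  ∃ e : A ≃ B, ∀ (i : R.ι) (v : Fin (R.arity i) → A),
    R.rel i (fun j => (v j : E)) ↔ R.rel i (fun j => (e (v j) : E))

/-- `F` is a monomorphic part of `R`: any two finite subsets of the same cardinality which
agree outside `F` induce isomorphic substructures. -/
def IsMonoPart {E : Type*} (R : RelStruct E) (F : Set E) : Prop :=
  ∀ A A' : Set E, A.Finite → A'.Finite → A.ncard = A'.ncard → A \ F = A' \ F →
    R.Iso A A'

/-- A collection `P` of subsets of `E` (a set partition of `E`) is a monomorphic
decomposition of `R` if any two finite subsets meeting every block in the same number of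
elements induce isomorphic substructures. -/
def IsMonoDecomp {E : Type*} (R : RelStruct E) (P : Set (Set E)) : Prop :=
  ∀ A A' : Set E, A.Finite → A'.Finite →
    (∀ p ∈ P, (A ∩ p).ncard = (A' ∩ p).ncard) → R.Iso A A'

/-- Indexed variant: a family `(B x)_{x ∈ X}` of subsets of `E` is a monomorphic
decomposition of `R` if any two finite subsets meeting every block in the same number of
elements induce isomorphic substructures. -/
def IsMonoDecompFam {E : Type*} {X : Type*} (R : RelStruct E) (B : X → Set E) : Prop :=
  ∀ A A' : Set E, A.Finite → A'.Finite →
    (∀ x : X, (A ∩ B x).ncard = (A' ∩ B x).ncard) → R.Iso A A'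

/-! Since isomorphism is transitive, `F` is a monomorphic part as soon as exchanging one point
of `F` for another over a fixed finite set preserves the isomorphism type: two finite sets of the
same size agreeing outside `F` are joined by a chain of such exchanges. For monomorphic parts
`F₁ ∋ a` and `F₂ ∋ b` sharing a point `x`, the exchange `a ↦ b` factors as `a ↦ x ↦ b`; when `x`
already lies in the fixed set, first `x` is moved to `b`, then `a` to `x`. -/

namespace RelStruct.Iso

variable {E : Type*}

theorem refl (R : RelStruct E) (A : Set E) : R.Iso A A :=
  ⟨Equiv.refl _, fun _ _ => Iff.rfl⟩

theorem trans {R : RelStruct E} {A B C : Set E} : R.Iso A B → R.Iso B C → R.Iso A C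
  | ⟨e, he⟩, ⟨f, hf⟩ => ⟨e.trans f, fun i v => (he i v).trans (hf i fun j => e (v j))⟩

instance {R : RelStruct E} : @Trans (Set E) (Set E) (Set E) R.Iso R.Iso R.Iso := ⟨trans⟩

end RelStruct.Iso

namespace IsMonoPart

variable {E : Type*} {R : RelStruct E} {F : Set E}

theorem iso_insert (hF : IsMonoPart R F) {C : Set E} (hC : C.Finite) {a b : E}
    (ha : a ∈ F) (hb : b ∈ F) (haC : a ∉ C) (hbC : b ∉ C) :
    R.Iso (insert a C) (insert b C) :=
  hF _ _ (hC.insert a) (hC.insert b)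
    (by rw [Set.ncard_insert_of_notMem haC hC, Set.ncard_insert_of_notMem hbC hC])
    (by rw [Set.insert_sdiff_of_mem _ ha, Set.insert_sdiff_of_mem _ hb])

theorem of_iso_insert
    (h : ∀ C : Set E, C.Finite → ∀ a ∈ F, ∀ b ∈ F, a ∉ C → b ∉ C →
      R.Iso (insert a C) (insert b C)) :
    IsMonoPart R F := by
  intro A A' hA hA' hcard hout
  induction hn : (A \ A').ncard generalizing A with
  | zero =>
    have hsub : A ⊆ A' := Set.sdiff_eq_empty.1 ((Set.ncard_eq_zero hA.sdiff).1 hn)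
    exact Set.eq_of_subset_of_ncard_le hsub hcard.ge hA' ▸ RelStruct.Iso.refl R A
  | succ n ih =>
    have hsymm : (A' \ A).ncard = (A \ A').ncard := by
      have h₁ := Set.ncard_inter_add_ncard_sdiff_eq_ncard A A' hA
      have h₂ := Set.ncard_inter_add_ncard_sdiff_eq_ncard A' A hA'
      rw [Set.inter_comm] at h₂
      omega
    obtain ⟨a, haA, haA'⟩ := Set.nonempty_of_ncard_ne_zero (s := A \ A') (by omega)
    obtain ⟨b, hbA', hbA⟩ := Set.nonempty_of_ncard_ne_zero (s := A' \ A) (by omega)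
    have haF : a ∈ F := by_contra fun haF => haA' (hout ▸ ⟨haA, haF⟩ : a ∈ A' \ F).1
    have hbF : b ∈ F := by_contra fun hbF => hbA (hout.symm ▸ ⟨hbA', hbF⟩ : b ∈ A \ F).1
    have hexch : R.Iso A (insert b (A \ {a})) := by
      conv_lhs => rw [← Set.insert_sdiff_self_of_mem haA]
      exact h _ hA.sdiff a haF b hbF (fun h => h.2 rfl) (fun h => hbA h.1)
    refine hexch.trans (ih _ (hA.sdiff.insert b) ?_ ?_ ?_)
    · rw [Set.ncard_exchange hbA haA, hcard]
    · rw [Set.insert_sdiff_of_mem _ hbF, Set.sdiff_sdiff_comm,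
        Set.sdiff_singleton_eq_self fun h => h.2 haF, hout]
    · rw [Set.insert_sdiff_of_mem _ hbA', Set.sdiff_sdiff_comm,
        Set.ncard_sdiff_singleton_of_mem (Set.mem_sdiff_of_mem haA haA'), hn, Nat.add_sub_cancel]

theorem iso_insert_of_common_point {F₁ F₂ : Set E} (h₁ : IsMonoPart R F₁)
    (h₂ : IsMonoPart R F₂) {x : E} (hx₁ : x ∈ F₁) (hx₂ : x ∈ F₂) {C : Set E} (hC : C.Finite)
    {a b : E} (ha : a ∈ F₁) (hb : b ∈ F₂) (haC : a ∉ C) (hbC : b ∉ C) :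
    R.Iso (insert a C) (insert b C) := by
  by_cases hab : a = b
  · exact hab ▸ RelStruct.Iso.refl R _
  by_cases hxC : x ∈ C
  · obtain ⟨D, rfl, hxD⟩ : ∃ D, C = insert x D ∧ x ∉ D :=
      ⟨C \ {x}, (Set.insert_sdiff_self_of_mem hxC).symm, fun h => h.2 rfl⟩
    have hD : D.Finite := hC.subset (Set.subset_insert x D)
    have hax : a ≠ x := fun h => haC (h ▸ Set.mem_insert x D)
    have hbx : b ≠ x := fun h => hbC (h ▸ Set.mem_insert x D)
    have haD : a ∉ D := fun h => haC (Set.mem_insert_of_mem x h)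
    have hbD : b ∉ D := fun h => hbC (Set.mem_insert_of_mem x h)
    calc R.Iso (insert a (insert x D)) (insert x (insert a D)) :=
          Set.insert_comm a x D ▸ .refl R _
      R.Iso _ (insert b (insert a D)) :=
        h₂.iso_insert (hD.insert a) hx₂ hb (by simp [hxD, Ne.symm hax])
          (by simp [hbD, Ne.symm hab])
      _ = insert a (insert b D) := Set.insert_comm b a D
      R.Iso _ (insert x (insert b D)) :=
        h₁.iso_insert (hD.insert b) ha hx₁ (by simp [haD, hab]) (by simp [hxD, Ne.symm hbx])
      _ = insert b (insert x D) := Set.insert_comm x b D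
  · exact (h₁.iso_insert hC ha hx₁ haC hxC).trans (h₂.iso_insert hC hx₂ hb hxC hbC)

theorem mono (hF : IsMonoPart R F) {F' : Set E} (hF' : F' ⊆ F) : IsMonoPart R F' :=
  of_iso_insert fun _ hC _ ha _ hb => hF.iso_insert hC (hF' ha) (hF' hb)

end IsMonoPart

theorem isMonoPart_singleton {E : Type*} (R : RelStruct E) (x : E) : IsMonoPart R {x} :=
  IsMonoPart.of_iso_insert fun _ _ a ha b hb _ _ => by
    rw [Set.eq_of_mem_singleton ha, Set.eq_of_mem_singleton hb]
    exact RelStruct.Iso.refl R _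

theorem isMonoPart_sUnion {E : Type*} {R : RelStruct E} {𝒮 : Set (Set E)}
    (h𝒮 : ∀ F ∈ 𝒮, IsMonoPart R F) {x : E} (hx : x ∈ ⋂₀ 𝒮) : IsMonoPart R (⋃₀ 𝒮) :=
  IsMonoPart.of_iso_insert fun _ hC _ ⟨Fa, hFa, ha⟩ _ ⟨Fb, hFb, hb⟩ =>
    (h𝒮 Fa hFa).iso_insert_of_common_point (h𝒮 Fb hFb) (hx Fa hFa) (hx Fb hFb) hC ha hb

/-- The monomorphic parts of a relational structure `R` on `E` satisfy the
goodness axioms: singletons are monomorphic parts; subsets of monomorphic parts are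
monomorphic parts; and a (possibly infinite) family of monomorphic parts with a common point
has union a monomorphic part. -/
theorem monoParts_satisfy_goodness {E : Type*} (R : RelStruct E) :
    (∀ x : E, IsMonoPart R {x}) ∧
    (∀ F : Set E, IsMonoPart R F → ∀ F' ⊆ F, IsMonoPart R F') ∧
    (∀ 𝒮 : Set (Set E), (∀ F ∈ 𝒮, IsMonoPart R F) → (⋂₀ 𝒮).Nonempty →
      IsMonoPart R (⋃₀ 𝒮)) :=
  ⟨isMonoPart_singleton R, fun _ hF _ hF' => hF.mono hF',
    fun _ h𝒮 ⟨_, hx⟩ => isMonoPart_sUnion h𝒮 hx⟩
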